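/- arXiv:1903.04435 — 9 statements merged into one kernel-verified Lean document; each statement's English description precedes it below -/
import Mathlib

section
/- Every Rota–Baxter associative algebra of weight one becomes a tridendriform algebra: if A is an associative algebra with a linear map R : A → A satisfying R(a)·R(b) = R(R(a)·b + a·R(b) + a·b), then the bilinear operations a ≺ b := a·R(b), a ≻ b := R(a)·b, together with the product a·b, satisfy all seven tridendriform identities: (a≺b)≺c = a≺(b≺c) + a≺(b≻c) + a≺(b·c); (a·b)≺c = a·(b≺c); (a·b)·c = a·(b·c); (a≻b)≺c = a≻(b≺c); (a≺b)·c = a·(b≻c); (a≻b)·c = a≻(b·c); (a≺b)≻c + (a≻b)≻c + (a·b)≻c = a≻(b≻c). -/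
/-- Every Rota–Baxter associative algebra of weight one becomes a tridendriform
algebra via `a ≺ b := a * R b`, `a ≻ b := R a * b`, and the product `a * b`. -/
theorem rotaBaxter_assoc_weight_one_tridendriform
    {K A : Type*} [Field K] [CharZero K] [Ring A] [Algebra K A]
    (R : A →ₗ[K] A)
    (hRB : ∀ a b : A, R a * R b = R (R a * b + a * R b + a * b)) :
    ∀ a b c : A,
      ((a * R b) * R c = a * R (b * R c) + a * R (R b * c) + a * R (b * c)) ∧
      ((a * b) * R c = a * (b * R c)) ∧
      ((a * b) * c = a * (b * c)) ∧
      ((R a * b) * R c = R a * (b * R c)) ∧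
      ((a * R b) * c = a * (R b * c)) ∧
      ((R a * b) * c = R a * (b * c)) ∧
      (R (a * R b) * c + R (R a * b) * c + R (a * b) * c = R a * (R b * c)) := by
  intro a b c
  refine ⟨?_, mul_assoc _ _ _, mul_assoc _ _ _, mul_assoc _ _ _, mul_assoc _ _ _,
    mul_assoc _ _ _, ?_⟩
  · rw [mul_assoc, hRB b c, map_add, map_add, mul_add, mul_add]
    abel
  · rw [← add_mul, ← add_mul, ← map_add, ← map_add, ← mul_assoc]
    congr 1
    rw [hRB a b]
    congr 1
    abel
end

section
/- Every tridendriform algebra becomes a (right) post-Lie algebra: if A is a tridendriform algebra, then the operations [a,b] := a·b − b·a and a ◁ b := a ≺ b − b ≻ a satisfy: (i) [a,b] = −[b,a]; (ii) [[a,b],c] − [[a,c],b] = [a,[b,c]]; (iii) [a,b] ◁ c = [a ◁ c, b] + [a, b ◁ c]; (iv) ((a ◁ b) ◁ c − a ◁ (b ◁ c)) − ((a ◁ c) ◁ b − a ◁ (c ◁ b)) = a ◁ [b,c]. -/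
/-- The derived bracket `[a,b] := a·b - b·a` of a tridendriform algebra. -/
def tdLie {K A : Type*} [Field K] [AddCommGroup A] [Module K A]
    (d : A →ₗ[K] A →ₗ[K] A) (x y : A) : A := d x y - d y x

/-- The derived operation `a ◁ b := a ≺ b - b ≻ a` of a tridendriform algebra. -/
def tdTril {K A : Type*} [Field K] [AddCommGroup A] [Module K A]
    (p s : A →ₗ[K] A →ₗ[K] A) (x y : A) : A := p x y - s y x

/-- Every tridendriform algebra becomes a (right) post-Lie algebra via
`[a,b] := a·b - b·a` and `a ◁ b := a ≺ b - b ≻ a`. -/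
theorem tridendriform_postLie
    {K A : Type*} [Field K] [AddCommGroup A] [Module K A]
    (p s d : A →ₗ[K] A →ₗ[K] A)
    (h1 : ∀ a b c : A, p (p a b) c = p a (p b c) + p a (s b c) + p a (d b c))
    (h2 : ∀ a b c : A, p (d a b) c = d a (p b c))
    (h3 : ∀ a b c : A, d (d a b) c = d a (d b c))
    (h4 : ∀ a b c : A, p (s a b) c = s a (p b c))
    (h5 : ∀ a b c : A, d (p a b) c = d a (s b c))
    (h6 : ∀ a b c : A, d (s a b) c = s a (d b c))
    (h7 : ∀ a b c : A, s (p a b) c + s (s a b) c + s (d a b) c = s a (s b c)) :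
    ∀ a b c : A,
      (tdLie d a b = - tdLie d b a) ∧
      (tdLie d (tdLie d a b) c - tdLie d (tdLie d a c) b = tdLie d a (tdLie d b c)) ∧
      (tdTril p s (tdLie d a b) c
        = tdLie d (tdTril p s a c) b + tdLie d a (tdTril p s b c)) ∧
      ((tdTril p s (tdTril p s a b) c - tdTril p s a (tdTril p s b c))
          - (tdTril p s (tdTril p s a c) b - tdTril p s a (tdTril p s c b))
        = tdTril p s a (tdLie d b c)) := by
  intro a b c
  refine ⟨?_, ?_, ?_, ?_⟩
  · simp [tdLie]
  · simp only [tdLie, map_sub, LinearMap.sub_apply, h3]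
    abel
  · simp only [tdLie, tdTril, map_sub, LinearMap.sub_apply, h2, h5, h6]
    abel
  · simp only [tdLie, tdTril, map_sub, LinearMap.sub_apply, h1, h2, h3, h4, h5, h6, ← h7]
    abel
end

section
/- Every Rota–Baxter Lie algebra of weight one becomes a (right) post-Lie algebra: if L is a Lie algebra with a linear map R : L → L satisfying [R(a), R(b)] = R([R(a), b] + [a, R(b)] + [a, b]), then the operation a ◁ b := [a, R(b)] satisfies [a,b] ◁ c = [a ◁ c, b] + [a, b ◁ c] and ((a ◁ b) ◁ c − a ◁ (b ◁ c)) − ((a ◁ c) ◁ b − a ◁ (c ◁ b)) = a ◁ [b,c]. -/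
/-- Every Rota–Baxter Lie algebra of weight one becomes a (right) post-Lie
algebra via `a ◁ b := ⁅a, R b⁆`. -/
theorem rotaBaxter_lie_weight_one_postLie
    {K L : Type*} [Field K] [CharZero K] [LieRing L] [LieAlgebra K L]
    (R : L →ₗ[K] L)
    (hRB : ∀ a b : L, ⁅R a, R b⁆ = R (⁅R a, b⁆ + ⁅a, R b⁆ + ⁅a, b⁆)) :
    ∀ a b c : L,
      (⁅⁅a, b⁆, R c⁆ = ⁅⁅a, R c⁆, b⁆ + ⁅a, ⁅b, R c⁆⁆) ∧
      ((⁅⁅a, R b⁆, R c⁆ - ⁅a, R ⁅b, R c⁆⁆) - (⁅⁅a, R c⁆, R b⁆ - ⁅a, R ⁅c, R b⁆⁆)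
        = ⁅a, R ⁅b, c⁆⁆) := by
  intro a b c
  constructor
  · rw [lie_lie, ← lie_skew ⁅a, R c⁆ b]; abel
  · have h1 : ⁅⁅a, R b⁆, R c⁆ - ⁅⁅a, R c⁆, R b⁆ = ⁅a, ⁅R b, R c⁆⁆ := by
      rw [lie_lie, ← lie_skew ⁅a, R c⁆ (R b)]; abel
    have h2 := hRB b c
    rw [sub_sub_sub_comm, h1, h2]
    have h3 : ⁅a, R ⁅b, R c⁆⁆ - ⁅a, R ⁅c, R b⁆⁆ = ⁅a, R ⁅b, R c⁆ - R ⁅c, R b⁆⁆ := by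
      rw [lie_sub]
    rw [h3, ← lie_sub]
    congr 1
    rw [← map_sub, ← map_sub]
    congr 1
    rw [← lie_skew c (R b)]
    abel
end

section
/- In any tridendriform algebra, with the derived operations [a,b] := a·b − b·a, a∘b := a·b + b·a, a ◁ b := a ≺ b − b ≻ a, and a ▷ b := a ≺ b + b ≻ a, the identity [a, b ▷ c] = [a,b] ▷ c + (a ◁ c)∘b holds for all a, b, c. -/
/-- Derived operation `x∘y := x·y + y·x` of a tridendriform algebra. -/
def tdCirc {K A : Type*} [Field K] [AddCommGroup A] [Module K A]
    (d : A →ₗ[K] A →ₗ[K] A) (x y : A) : A := d x y + d y x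

/-- Derived operation `x ▷ y := x ≺ y + y ≻ x` of a tridendriform algebra. -/
def tdTrir {K A : Type*} [Field K] [AddCommGroup A] [Module K A]
    (p s : A →ₗ[K] A →ₗ[K] A) (x y : A) : A := p x y + s y x

theorem tridendriform_lie_trir
    {K A : Type*} [Field K] [AddCommGroup A] [Module K A]
    (p s d : A →ₗ[K] A →ₗ[K] A)
    (h1 : ∀ a b c : A, p (p a b) c = p a (p b c) + p a (s b c) + p a (d b c))
    (h2 : ∀ a b c : A, p (d a b) c = d a (p b c))
    (h3 : ∀ a b c : A, d (d a b) c = d a (d b c))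
    (h4 : ∀ a b c : A, p (s a b) c = s a (p b c))
    (h5 : ∀ a b c : A, d (p a b) c = d a (s b c))
    (h6 : ∀ a b c : A, d (s a b) c = s a (d b c))
    (h7 : ∀ a b c : A, s (p a b) c + s (s a b) c + s (d a b) c = s a (s b c)) :
    ∀ a b c : A,
      tdLie d a (tdTrir p s b c) = tdTrir p s (tdLie d a b) c + tdCirc d (tdTril p s a c) b := by
  intro a b c
  simp only [tdLie, tdTrir, tdCirc, tdTril, map_add, map_sub, LinearMap.add_apply,
    LinearMap.sub_apply, h2, h5, h6]
  abel
end

section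
/- In any tridendriform algebra, with the derived operations [a,b] := a·b − b·a, a∘b := a·b + b·a, a ◁ b := a ≺ b − b ≻ a, and a ▷ b := a ≺ b + b ≻ a, the identity (a∘b) ◁ c = (a ◁ c)∘b + a∘(b ◁ c) holds for all a, b, c. -/
theorem tridendriform_circ_tril
    {K A : Type*} [Field K] [AddCommGroup A] [Module K A]
    (p s d : A →ₗ[K] A →ₗ[K] A)
    (h1 : ∀ a b c : A, p (p a b) c = p a (p b c) + p a (s b c) + p a (d b c))
    (h2 : ∀ a b c : A, p (d a b) c = d a (p b c))
    (h3 : ∀ a b c : A, d (d a b) c = d a (d b c))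
    (h4 : ∀ a b c : A, p (s a b) c = s a (p b c))
    (h5 : ∀ a b c : A, d (p a b) c = d a (s b c))
    (h6 : ∀ a b c : A, d (s a b) c = s a (d b c))
    (h7 : ∀ a b c : A, s (p a b) c + s (s a b) c + s (d a b) c = s a (s b c)) :
    ∀ a b c : A,
      tdTril p s (tdCirc d a b) c = tdCirc d (tdTril p s a c) b + tdCirc d a (tdTril p s b c) := by
  intro a b c
  simp only [tdTril, tdCirc, map_add, map_sub, LinearMap.add_apply, LinearMap.sub_apply,
    h2, h5, h6]
  abel
end

section
/- In any tridendriform algebra, with the derived operations [a,b] := a·b − b·a, a∘b := a·b + b·a, a ◁ b := a ≺ b − b ≻ a, and a ▷ b := a ≺ b + b ≻ a, the identity a ◁ (b ▷ c + c ▷ b + b∘c) = (a ▷ b) ◁ c + (a ▷ c) ◁ b holds for all a, b, c. -/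
theorem tridendriform_tril_sym
    {K A : Type*} [Field K] [AddCommGroup A] [Module K A]
    (p s d : A →ₗ[K] A →ₗ[K] A)
    (h1 : ∀ a b c : A, p (p a b) c = p a (p b c) + p a (s b c) + p a (d b c))
    (h2 : ∀ a b c : A, p (d a b) c = d a (p b c))
    (h3 : ∀ a b c : A, d (d a b) c = d a (d b c))
    (h4 : ∀ a b c : A, p (s a b) c = s a (p b c))
    (h5 : ∀ a b c : A, d (p a b) c = d a (s b c))
    (h6 : ∀ a b c : A, d (s a b) c = s a (d b c))
    (h7 : ∀ a b c : A, s (p a b) c + s (s a b) c + s (d a b) c = s a (s b c)) :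
    ∀ a b c : A,
      tdTril p s a (tdTrir p s b c + tdTrir p s c b + tdCirc d b c) = tdTril p s (tdTrir p s a b) c + tdTril p s (tdTrir p s a c) b := by
  intro a b c
  simp only [tdTril, tdTrir, tdCirc, map_add, LinearMap.add_apply]
  rw [h1 a b c, h1 a c b, h4 b a c, h4 c a b, ← h7 c b a, ← h7 b c a]
  abel
end

section
/- In any tridendriform algebra, with the derived operations a∘b := a·b + b·a, a ◁ b := a ≺ b − b ≻ a, and a ▷ b := a ≺ b + b ≻ a, the identity (a ▷ b) ▷ c + (a ◁ c) ◁ b = a ▷ (b ▷ c + c ▷ b + b∘c) holds for all a, b, c. -/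
theorem tridendriform_trir_trir
    {K A : Type*} [Field K] [AddCommGroup A] [Module K A]
    (p s d : A →ₗ[K] A →ₗ[K] A)
    (h1 : ∀ a b c : A, p (p a b) c = p a (p b c) + p a (s b c) + p a (d b c))
    (h2 : ∀ a b c : A, p (d a b) c = d a (p b c))
    (h3 : ∀ a b c : A, d (d a b) c = d a (d b c))
    (h4 : ∀ a b c : A, p (s a b) c = s a (p b c))
    (h5 : ∀ a b c : A, d (p a b) c = d a (s b c))
    (h6 : ∀ a b c : A, d (s a b) c = s a (d b c))
    (h7 : ∀ a b c : A, s (p a b) c + s (s a b) c + s (d a b) c = s a (s b c)) :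
    ∀ a b c : A,
      tdTrir p s (tdTrir p s a b) c + tdTril p s (tdTril p s a c) b = tdTrir p s a (tdTrir p s b c + tdTrir p s c b + tdCirc d b c) := by
  intro a b c
  simp only [tdTrir, tdTril, tdCirc, map_add, map_sub, LinearMap.add_apply,
    LinearMap.sub_apply]
  rw [h1 a b c, h4 b a c, h1 a c b, h4 c a b, ← h7 b c a, ← h7 c b a]
  abel
end

section
/- In any tridendriform algebra, with the derived operations [a,b] := a·b − b·a, a∘b := a·b + b·a, a ◁ b := a ≺ b − b ≻ a, and a ▷ b := a ≺ b + b ≻ a, the identity (a∘b) ▷ c + [a,b] ◁ c = a∘(b ▷ c) + [a, b ◁ c] holds for all a, b, c. -/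
theorem tridendriform_circ_trir_mixed
    {K A : Type*} [Field K] [AddCommGroup A] [Module K A]
    (p s d : A →ₗ[K] A →ₗ[K] A)
    (h1 : ∀ a b c : A, p (p a b) c = p a (p b c) + p a (s b c) + p a (d b c))
    (h2 : ∀ a b c : A, p (d a b) c = d a (p b c))
    (h3 : ∀ a b c : A, d (d a b) c = d a (d b c))
    (h4 : ∀ a b c : A, p (s a b) c = s a (p b c))
    (h5 : ∀ a b c : A, d (p a b) c = d a (s b c))
    (h6 : ∀ a b c : A, d (s a b) c = s a (d b c))
    (h7 : ∀ a b c : A, s (p a b) c + s (s a b) c + s (d a b) c = s a (s b c)) :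
    ∀ a b c : A,
      tdTrir p s (tdCirc d a b) c + tdTril p s (tdLie d a b) c = tdCirc d a (tdTrir p s b c) + tdLie d a (tdTril p s b c) := by
  intro a b c
  simp only [tdTrir, tdTril, tdCirc, tdLie, map_add, map_sub, LinearMap.add_apply,
    LinearMap.sub_apply, h2, h6]
  abel
end

section
/- Every Rota–Baxter Lie algebra of weight zero becomes a (right) pre-Lie algebra: if L is a Lie algebra with a linear map R : L → L satisfying [R(a), R(b)] = R([R(a), b] + [a, R(b)]), then the operation a ◁ b := [a, R(b)] satisfies the right pre-Lie identity (a ◁ b) ◁ c − a ◁ (b ◁ c) = (a ◁ c) ◁ b − a ◁ (c ◁ b) for all a, b, c. -/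
/-- Every Rota–Baxter Lie algebra of weight zero becomes a (right) pre-Lie
algebra via `a ◁ b := ⁅a, R b⁆`. -/
theorem rotaBaxter_lie_weight_zero_preLie
    {K L : Type*} [Field K] [CharZero K] [LieRing L] [LieAlgebra K L]
    (R : L →ₗ[K] L)
    (hRB : ∀ a b : L, ⁅R a, R b⁆ = R (⁅R a, b⁆ + ⁅a, R b⁆)) :
    ∀ a b c : L,
      ⁅⁅a, R b⁆, R c⁆ - ⁅a, R ⁅b, R c⁆⁆
        = ⁅⁅a, R c⁆, R b⁆ - ⁅a, R ⁅c, R b⁆⁆ := by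
  intro a b c
  have h := hRB b c
  have hj : ⁅⁅a, R b⁆, R c⁆ - ⁅⁅a, R c⁆, R b⁆ = ⁅a, ⁅R b, R c⁆⁆ := by
    rw [lie_lie, ← lie_skew ⁅a, R c⁆ (R b)]; abel
  have key : R ⁅b, R c⁆ - R ⁅c, R b⁆ = ⁅R b, R c⁆ := by
    rw [h, map_add]
    have : (⁅R b, c⁆ : L) = -⁅c, R b⁆ := by rw [lie_skew]
    rw [this, map_neg]; abel
  have := congrArg (fun x => ⁅a, x⁆) key
  simp only [lie_sub] at this
  linear_combination (norm := abel) hj - this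
end
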